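/- For any trace-preserving completely positive map E on B(H) with dim H < ∞ and any subspace H' ⊆ H, the entanglement fidelity of the maximally mixed state on H' satisfies 1 − F_e(π_{H'}, E) ≤ (3/2)(1 − F_p(H', E)), where F_p(H',E) = min over unit vectors φ ∈ H' of ⟨φ|E(|φ⟩⟨φ|)|φ⟩. Consequently, the quantum capacity defined via minimum pure-state fidelity is at most that defined via entanglement fidelity. -/

import Mathlib

/-!
Write `B m u v = ⟨e u, A m e v⟩` and `D = #H'`. For `ω : Fin D → ZMod 4` the phase-randomised
vector `∑ u, i ^ ω u • e u` of `H'` has squared norm `D`, so its pure-state fidelity is at least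
`D² F_p`. Averaging this quartic expression over `ω`, the fourth moments of independent uniform
fourth roots of unity vanish unless the phases cancel in pairs, and the average is
`∑ m, |tr B m|² + ∑ m, ∑ u ≠ v, |B m u v|² = D² F_e + (off-diagonal weight)`.
(With signs instead of fourth roots, a third pairing would survive.)
By Bessel's inequality and trace preservation every column `v` of `B` carries total weight at most
`1`, of which at least `F_p` sits on the diagonal; so the off-diagonal weight is at most
`D (1 - F_p)`, and `D² F_p ≤ D² F_e + D (1 - F_p)` gives the claim for `D ≥ 2`. For `D = 1`,
`F_e` is itself a pure-state fidelity.
-/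

open Matrix Complex ComplexConjugate

local notation "ζ" => (ZMod.stdAddChar : AddChar (ZMod 4) ℂ)

lemma AddChar.map_sum_eq_prod {ι A M : Type*} [AddCommMonoid A] [CommMonoid M]
    (ψ : AddChar A M) (s : Finset ι) (f : ι → A) : ψ (∑ i ∈ s, f i) = ∏ i ∈ s, ψ (f i) := by
  induction s using Finset.cons_induction <;> simp [*, AddChar.map_add_eq_mul]

lemma ite_or_eq_add_sub {α : Type*} [AddGroup α] (P Q : Prop) [Decidable P] [Decidable Q]
    (x : α) : (if P ∨ Q then x else 0) =
      (if P then x else 0) + (if Q then x else 0) - (if P ∧ Q then x else 0) := by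
  by_cases P <;> by_cases Q <;> simp [*]

section Phase

variable {n : Type*} [Fintype n] [DecidableEq n]

lemma normSq_stdAddChar {N : ℕ} [NeZero N] (x : ZMod N) : normSq (ZMod.stdAddChar x) = 1 := by
  rw [normSq_eq_norm_sq, AddChar.norm_apply, one_pow]

lemma sum_stdAddChar_dotProduct {N : ℕ} [NeZero N] (a : n → ZMod N) :
    ∑ ω : n → ZMod N, ZMod.stdAddChar (ω ⬝ᵥ a) =
      if a = 0 then (N : ℂ) ^ Fintype.card n else 0 := by
  simp_rw [dotProduct, AddChar.map_sum_eq_prod]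
  rw [← Fintype.prod_sum (fun i (x : ZMod N) => ZMod.stdAddChar (x * a i))]
  simp only [AddChar.sum_mulShift _ (ZMod.isPrimitive_stdAddChar N), Nat.cast_ite, Nat.cast_zero,
    ZMod.card, Finset.prod_ite_zero, Finset.prod_const, Finset.card_univ, Finset.mem_univ,
    true_implies, funext_iff, Pi.zero_apply]

omit [Fintype n] in
lemma pi_single_add_sub_eq_zero_iff (u v u' v' : n) :
    Pi.single v 1 + Pi.single u' 1 - Pi.single u 1 - Pi.single v' 1 = (0 : n → ZMod 4) ↔
      (u = v ∧ u' = v') ∨ (u = u' ∧ v = v') := by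
  constructor
  · intro h
    have hu := congrFun h u; have hv := congrFun h v
    have hu' := congrFun h u'; have hv' := congrFun h v'
    simp only [Pi.sub_apply, Pi.add_apply, Pi.single_apply, Pi.zero_apply] at hu hv hu' hv'
    rcases eq_or_ne u v with h1 | h1 <;> rcases eq_or_ne u' v' with h2 | h2 <;>
      rcases eq_or_ne u u' with h3 | h3 <;> rcases eq_or_ne v v' with h4 | h4 <;>
      rcases eq_or_ne u v' with h5 | h5 <;> rcases eq_or_ne v u' with h6 | h6 <;>
      simp_all <;> tauto
  · rintro (⟨rfl, rfl⟩ | ⟨rfl, rfl⟩) <;> abel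

lemma sum_phase_moment (u v u' v' : n) :
    ∑ ω : n → ZMod 4, conj (ζ (ω u)) * ζ (ω v) * ζ (ω u') * conj (ζ (ω v')) =
      if (u = v ∧ u' = v') ∨ (u = u' ∧ v = v') then 4 ^ Fintype.card n else 0 := by
  have h (ω : n → ZMod 4) : conj (ζ (ω u)) * ζ (ω v) * ζ (ω u') * conj (ζ (ω v')) =
      ζ (ω ⬝ᵥ (Pi.single v 1 + Pi.single u' 1 - Pi.single u 1 - Pi.single v' 1)) := by
    simp only [sub_eq_add_neg, dotProduct_add, dotProduct_neg, dotProduct_single, mul_one,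
      AddChar.map_add_eq_mul, AddChar.map_neg_eq_conj]
    ring
  simp_rw [h, sum_stdAddChar_dotProduct, pi_single_add_sub_eq_zero_iff]
  norm_num

lemma sum_normSq_phase_sum (B : n → n → ℂ) :
    ∑ ω : n → ZMod 4, normSq (∑ u, ∑ v, conj (ζ (ω u)) * ζ (ω v) * B u v) =
      4 ^ Fintype.card n *
        (normSq (∑ u, B u u) + ∑ u, ∑ v, normSq (B u v) - ∑ u, normSq (B u u)) := by
  have h (u u' v v' : n) :
      ∑ ω : n → ZMod 4, conj (ζ (ω u)) * ζ (ω v) * B u v *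
        (ζ (ω u') * conj (ζ (ω v')) * conj (B u' v')) =
      (if (u = v ∧ u' = v') ∨ (u = u' ∧ v = v') then 4 ^ Fintype.card n else 0) *
        (B u v * conj (B u' v')) := by
    rw [← sum_phase_moment, Finset.sum_mul]
    exact Finset.sum_congr rfl fun ω _ => by ring
  apply Complex.ofReal_injective
  push_cast
  simp_rw [← Complex.mul_conj, map_sum, map_mul, Complex.conj_conj, Finset.sum_mul_sum]
  rw [Finset.sum_comm]
  simp_rw [Finset.sum_comm (γ := n → ZMod 4), h]
  simp [ite_or_eq_add_sub, add_mul, sub_mul, Finset.sum_add_distrib, Finset.sum_sub_distrib,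
    ite_and, Finset.sum_ite_irrel, Finset.sum_ite_eq, Finset.mul_sum, mul_sub, mul_add]

end Phase

section Frame

variable {ι n : Type*} [Fintype ι]

lemma star_dotProduct_self_eq_sum_normSq (x : ι → ℂ) :
    star x ⬝ᵥ x = ((∑ j, normSq (x j) : ℝ) : ℂ) := by
  simp [dotProduct, normSq_eq_conj_mul_self]

lemma sum_normSq_eq_one [DecidableEq n] {e : n → ι → ℂ}
    (he : ∀ u v, star (e u) ⬝ᵥ e v = if u = v then 1 else 0) (u : n) :
    ∑ j, normSq (e u j) = 1 := by
  have h := he u u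
  rw [if_pos rfl, star_dotProduct_self_eq_sum_normSq] at h
  exact_mod_cast h

variable [Fintype n]

lemma sum_normSq_star_dotProduct_le [DecidableEq n] {e : n → ι → ℂ}
    (he : ∀ u v, star (e u) ⬝ᵥ e v = if u = v then 1 else 0) (w : ι → ℂ) :
    ∑ u, normSq (star (e u) ⬝ᵥ w) ≤ ∑ j, normSq (w j) := by
  have hE : Orthonormal ℂ fun u => WithLp.toLp 2 (e u) := by
    rw [orthonormal_iff_ite]
    intro u v
    rw [EuclideanSpace.inner_toLp_toLp, dotProduct_comm, he]
  simpa [normSq_eq_norm_sq, EuclideanSpace.inner_toLp_toLp, dotProduct_comm,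
    EuclideanSpace.norm_sq_eq] using hE.sum_inner_products_le (WithLp.toLp 2 w) (s := Finset.univ)

lemma star_sum_smul_dotProduct_mulVec_sum_smul (M : Matrix ι ι ℂ) (c d : n → ℂ)
    (e : n → ι → ℂ) :
    star (∑ u, c u • e u) ⬝ᵥ M *ᵥ ∑ v, d v • e v =
      ∑ u, ∑ v, conj (c u) * d v * (star (e u) ⬝ᵥ M *ᵥ e v) := by
  simp only [star_sum, mulVec_sum, sum_dotProduct, dotProduct_sum, mulVec_smul, star_smul,
    smul_dotProduct, dotProduct_smul, smul_eq_mul, RCLike.star_def, Finset.mul_sum]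
  rw [Finset.sum_comm]
  exact Finset.sum_congr rfl fun _ _ => Finset.sum_congr rfl fun _ _ => by ring

lemma sum_normSq_sum_smul [DecidableEq n] {e : n → ι → ℂ}
    (he : ∀ u v, star (e u) ⬝ᵥ e v = if u = v then 1 else 0) (c : n → ℂ) :
    ∑ j, normSq ((∑ u, c u • e u) j) = ∑ u, normSq (c u) := by
  classical
  have h := star_sum_smul_dotProduct_mulVec_sum_smul 1 c c e
  rw [one_mulVec] at h
  apply ofReal_injective
  rw [← star_dotProduct_self_eq_sum_normSq, h]
  simp [he, normSq_eq_conj_mul_self]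

end Frame

section Kraus

variable {ι κ : Type*} [Fintype ι] [Fintype κ]

def pureFidelity (A : κ → Matrix ι ι ℂ) (φ : ι → ℂ) : ℝ :=
  ∑ m, normSq (star φ ⬝ᵥ A m *ᵥ φ)

noncomputable def minPureFidelity (A : κ → Matrix ι ι ℂ) (V : Submodule ℂ (ι → ℂ)) : ℝ :=
  sInf {r | ∃ φ : ι → ℂ, (∑ j, normSq (φ j)) = 1 ∧ φ ∈ V ∧ r = pureFidelity A φ}

variable (A : κ → Matrix ι ι ℂ)

lemma pureFidelity_nonneg (φ : ι → ℂ) : 0 ≤ pureFidelity A φ :=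
  Finset.sum_nonneg fun _ _ => normSq_nonneg _

lemma pureFidelity_smul (c : ℂ) (φ : ι → ℂ) :
    pureFidelity A (c • φ) = normSq c ^ 2 * pureFidelity A φ := by
  simp only [pureFidelity, Finset.mul_sum, mulVec_smul, star_smul, smul_dotProduct,
    dotProduct_smul, smul_eq_mul, RCLike.star_def, normSq_mul, normSq_conj]
  exact Finset.sum_congr rfl fun _ _ => by ring

lemma minPureFidelity_mul_sq_le {V : Submodule ℂ (ι → ℂ)} {φ : ι → ℂ} (hφ : φ ∈ V) :
    minPureFidelity A V * (∑ j, normSq (φ j)) ^ 2 ≤ pureFidelity A φ := by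
  set N := ∑ j, normSq (φ j) with hN_def
  have hN0 : 0 ≤ N := Finset.sum_nonneg fun j _ => normSq_nonneg (φ j)
  obtain hN | hN := hN0.eq_or_lt
  · rw [← hN]
    simpa using pureFidelity_nonneg A φ
  set c : ℂ := (((√N)⁻¹ : ℝ) : ℂ)
  have hc : normSq c = N⁻¹ := by simp only [c, normSq_ofReal, ← mul_inv, Real.mul_self_sqrt hN0]
  have hcφ : ∑ j, normSq ((c • φ) j) = 1 := by
    simp [normSq_mul, ← Finset.mul_sum, hc, ← hN_def, inv_mul_cancel₀ hN.ne']
  rw [← le_div_iff₀ (by positivity)]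
  calc minPureFidelity A V ≤ pureFidelity A (c • φ) :=
        csInf_le ⟨0, by rintro r ⟨ψ, -, -, rfl⟩; exact pureFidelity_nonneg A ψ⟩
          ⟨c • φ, hcφ, V.smul_mem c hφ, rfl⟩
    _ = pureFidelity A φ / N ^ 2 := by rw [pureFidelity_smul, hc]; field_simp

lemma sum_sum_normSq_mulVec [DecidableEq ι] (hTP : ∑ m, (A m)ᴴ * A m = 1) (x : ι → ℂ) :
    ∑ m, ∑ j, normSq ((A m *ᵥ x) j) = ∑ j, normSq (x j) := by
  have h : ∑ m, star (A m *ᵥ x) ⬝ᵥ A m *ᵥ x = star x ⬝ᵥ x := by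
    simp_rw [star_mulVec, ← dotProduct_mulVec, mulVec_mulVec, ← dotProduct_sum, ← sum_mulVec, hTP,
      one_mulVec]
  simp_rw [star_dotProduct_self_eq_sum_normSq] at h
  exact_mod_cast h

lemma sum_sum_normSq_diag_le {n : Type*} [Fintype n] (e : n → ι → ℂ) :
    ∑ m, ∑ u, normSq (star (e u) ⬝ᵥ A m *ᵥ e u) ≤
      ∑ m, ∑ u, ∑ v, normSq (star (e u) ⬝ᵥ A m *ᵥ e v) :=
  Finset.sum_le_sum fun m _ => Finset.sum_le_sum fun u _ =>
    Finset.single_le_sum (f := fun v => normSq (star (e u) ⬝ᵥ A m *ᵥ e v))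
      (fun _ _ => normSq_nonneg _) (Finset.mem_univ u)

variable {n : Type*} [Fintype n] [DecidableEq n] {e : n → ι → ℂ}

lemma sum_sum_normSq_column_le [DecidableEq ι] (hTP : ∑ m, (A m)ᴴ * A m = 1)
    (he : ∀ u v, star (e u) ⬝ᵥ e v = if u = v then 1 else 0) (v : n) :
    ∑ m, ∑ u, normSq (star (e u) ⬝ᵥ A m *ᵥ e v) ≤ 1 :=
  calc ∑ m, ∑ u, normSq (star (e u) ⬝ᵥ A m *ᵥ e v)
      ≤ ∑ m, ∑ j, normSq ((A m *ᵥ e v) j) :=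
        Finset.sum_le_sum fun m _ => sum_normSq_star_dotProduct_le he _
    _ = 1 := by rw [sum_sum_normSq_mulVec A hTP, sum_normSq_eq_one he]

lemma sum_sum_sum_normSq_le_card [DecidableEq ι] (hTP : ∑ m, (A m)ᴴ * A m = 1)
    (he : ∀ u v, star (e u) ⬝ᵥ e v = if u = v then 1 else 0) :
    ∑ m, ∑ u, ∑ v, normSq (star (e u) ⬝ᵥ A m *ᵥ e v) ≤ Fintype.card n :=
  calc ∑ m, ∑ u, ∑ v, normSq (star (e u) ⬝ᵥ A m *ᵥ e v)
      = ∑ v, ∑ m, ∑ u, normSq (star (e u) ⬝ᵥ A m *ᵥ e v) :=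
        (Finset.sum_congr rfl fun _ _ => Finset.sum_comm).trans Finset.sum_comm
    _ ≤ ∑ _v : n, (1 : ℝ) := Finset.sum_le_sum fun v _ => sum_sum_normSq_column_le A hTP he v
    _ = Fintype.card n := by simp

lemma card_mul_minPureFidelity_le (he : ∀ u v, star (e u) ⬝ᵥ e v = if u = v then 1 else 0) :
    Fintype.card n * minPureFidelity A (Submodule.span ℂ (Set.range e)) ≤
      ∑ m, ∑ u, normSq (star (e u) ⬝ᵥ A m *ᵥ e u) := by
  rw [Finset.sum_comm, ← nsmul_eq_mul, ← Finset.card_univ, ← Finset.sum_const]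
  refine Finset.sum_le_sum fun u _ => ?_
  have h := minPureFidelity_mul_sq_le A (Submodule.subset_span (Set.mem_range_self u) :
    e u ∈ Submodule.span ℂ (Set.range e))
  rwa [sum_normSq_eq_one he, one_pow, mul_one] at h

lemma card_sq_mul_minPureFidelity_le
    (he : ∀ u v, star (e u) ⬝ᵥ e v = if u = v then 1 else 0) :
    Fintype.card n ^ 2 * minPureFidelity A (Submodule.span ℂ (Set.range e)) ≤
      ∑ m, normSq (∑ u, star (e u) ⬝ᵥ A m *ᵥ e u) +
        ∑ m, ∑ u, ∑ v, normSq (star (e u) ⬝ᵥ A m *ᵥ e v) -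
        ∑ m, ∑ u, normSq (star (e u) ⬝ᵥ A m *ᵥ e u) := by
  set s := minPureFidelity A (Submodule.span ℂ (Set.range e))
  have hω (ω : n → ZMod 4) : Fintype.card n ^ 2 * s ≤
      ∑ m, normSq (∑ u, ∑ v, conj (ζ (ω u)) * ζ (ω v) * (star (e u) ⬝ᵥ A m *ᵥ e v)) := by
    have hmem : ∑ u, ζ (ω u) • e u ∈ Submodule.span ℂ (Set.range e) :=
      Submodule.sum_mem _ fun u _ => Submodule.smul_mem _ _ (Submodule.subset_span ⟨u, rfl⟩)
    have h := minPureFidelity_mul_sq_le A hmem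
    rw [mul_comm]
    simpa only [sum_normSq_sum_smul he, normSq_stdAddChar, Finset.sum_const, Finset.card_univ,
      nsmul_one, pureFidelity, star_sum_smul_dotProduct_mulVec_sum_smul] using h
  have h := Finset.sum_le_sum fun ω (_ : ω ∈ Finset.univ) => hω ω
  rw [Finset.sum_const, Finset.card_univ, Fintype.card_fun, ZMod.card, Finset.sum_comm] at h
  simp_rw [sum_normSq_phase_sum, ← Finset.mul_sum, nsmul_eq_mul, Finset.sum_sub_distrib,
    Finset.sum_add_distrib] at h
  push_cast at h
  exact le_of_mul_le_mul_left h (by positivity)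

end Kraus

lemma one_sub_div_sq_le_of_two_le {D s F R T : ℝ} (hD : 2 ≤ D) (hF : D ^ 2 * s ≤ F + R - T)
    (hT : D * s ≤ T) (hTR : T ≤ R) (hR : R ≤ D) : 1 - F / D ^ 2 ≤ 3 / 2 * (1 - s) := by
  have hs : s ≤ 1 := by nlinarith
  rw [sub_le_iff_le_add, ← sub_le_iff_le_add', le_div_iff₀ (by positivity)]
  nlinarith

/-- The channel is given by Kraus operators `A m` with `∑ m, (A m)ᴴ * A m = 1` and `H'` by an
orthonormal basis `e`. Then `F_e(π_{H'}) = ∑ m, |Tr(π_{H'} A m)|²`, the pure-state fidelity of `φ`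
is `∑ m, |⟨φ, A m φ⟩|²`, and `F_p` is its infimum over unit vectors of `H'`. -/
theorem stmt18 (ι : Type) [Fintype ι] [DecidableEq ι]
    (κ : Type) [Fintype κ]
    (A : κ → Matrix ι ι ℂ) (hTP : ∑ m, (A m)ᴴ * A m = 1)
    (D : ℕ) (hD : 0 < D)
    (e : Fin D → (ι → ℂ))
    (he : ∀ u v, star (e u) ⬝ᵥ e v = if u = v then 1 else 0) :
    1 - ∑ m, Complex.normSq ((D : ℂ)⁻¹ * ∑ u, star (e u) ⬝ᵥ (A m).mulVec (e u)) ≤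
      (3 / 2) * (1 - sInf {r : ℝ | ∃ φ : ι → ℂ,
        (∑ j, Complex.normSq (φ j)) = 1 ∧
        φ ∈ Submodule.span ℂ (Set.range e) ∧
        r = ∑ m, Complex.normSq (star φ ⬝ᵥ (A m).mulVec φ)}) := by
  have hdiag := card_mul_minPureFidelity_le A he
  have hphase := card_sq_mul_minPureFidelity_le A he
  have hR := sum_sum_sum_normSq_le_card A hTP he
  have hTR := sum_sum_normSq_diag_le A e
  rw [Fintype.card_fin] at hdiag hphase hR
  change _ ≤ 3 / 2 * (1 - minPureFidelity A (Submodule.span ℂ (Set.range e)))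
  simp_rw [normSq_mul, normSq_inv, normSq_natCast, ← Finset.mul_sum, ← div_eq_inv_mul, ← sq]
  obtain rfl | hD2 : D = 1 ∨ 2 ≤ D := by omega
  · simp only [Fin.sum_univ_one, Nat.cast_one, one_pow, one_mul, div_one] at hdiag hphase hR ⊢
    linarith
  · exact one_sub_div_sq_le_of_two_le (by exact_mod_cast hD2) hphase hdiag hTR hR
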